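/- Let E be a row-finite graph and let →₁ be the one-step rewriting relation on F_E \ {0}, with → its reflexive-transitive closure. If a = a₁ + a₂ with a₁, a₂ ∈ F_E \ {0} and a → b, then b can be written as b = b₁ + b₂ with a₁ → b₁ and a₂ → b₂. -/

import Mathlib

set_option linter.unusedSectionVars false

/-- The algebraic preorder on a commutative monoid: `a ≤ b` iff `b = a + c` for some `c`. -/
def algLE {M : Type*} [AddCommMonoid M] (a b : M) : Prop := ∃ c, b = a + c

/-- A row-finite directed graph: vertices `V`, edges `Ed`, source `s`, range `r`,
and for each vertex the (finite) set of edges it emits. -/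
structure RFGraph (V : Type) (Ed : Type) where
  s : Ed → V
  r : Ed → V
  emit : V → Finset Ed
  mem_emit : ∀ e v, e ∈ emit v ↔ s e = v

namespace RFGraph

variable {V Ed : Type} [DecidableEq V] (G : RFGraph V Ed)

/-- The one-step rewriting relation `→₁` on the free commutative monoid `Multiset V`:
replace one occurrence of a non-sink vertex `v` by the sum of ranges of edges emitted by `v`. -/
def Step1 (a b : Multiset V) : Prop :=
  ∃ v : V, v ∈ a ∧ G.emit v ≠ ∅ ∧ b = a.erase v + (G.emit v).val.map G.r

/-- The reflexive-transitive closure `→` of `→₁`. -/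
def Step : Multiset V → Multiset V → Prop := Relation.ReflTransGen G.Step1

/-- The congruence on the free commutative monoid generated by `→₁`. -/
def gcon : AddCon (Multiset V) := addConGen G.Step1

/-- The graph monoid `M_E`. -/
def GM := G.gcon.Quotient

instance : AddCommMonoid G.GM := inferInstanceAs (AddCommMonoid G.gcon.Quotient)

/-- One-step rewriting for the talented monoid: replace `v(i)` by `Σ_{e ∈ s⁻¹(v)} r(e)(i+1)`. -/
def TStep1 (a b : Multiset (V × ℤ)) : Prop :=
  ∃ (v : V) (i : ℤ), (v, i) ∈ a ∧ G.emit v ≠ ∅ ∧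
    b = a.erase (v, i) + (G.emit v).val.map (fun e => (G.r e, i + 1))

/-- The congruence generated by the talented one-step relation. -/
def tcon : AddCon (Multiset (V × ℤ)) := addConGen G.TStep1

/-- The talented monoid `M_E^{gr}`. -/
def TM := G.tcon.Quotient

instance : AddCommMonoid G.TM := inferInstanceAs (AddCommMonoid G.tcon.Quotient)

/-- The generator `v(i)` of the talented monoid. -/
def tgen (v : V) (i : ℤ) : G.TM := G.tcon.mk' {(v, i)}

/-- The shift `v(i) ↦ v(i+n)` on the free commutative monoid `Multiset (V × ℤ)`. -/
def shiftMul (n : ℤ) : Multiset (V × ℤ) →+ Multiset (V × ℤ) where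
  toFun a := a.map fun p => (p.1, p.2 + n)
  map_zero' := rfl
  map_add' a b := Multiset.map_add (fun p => (p.1, p.2 + n)) a b

lemma shift_inj (n : ℤ) : Function.Injective (fun p : V × ℤ => (p.1, p.2 + n)) := by
  rintro ⟨a, b⟩ ⟨c, d⟩ h
  simp only [Prod.mk.injEq] at h
  exact Prod.ext h.1 (by omega)

lemma tstep1_shift (n : ℤ) {a b : Multiset (V × ℤ)} (h : G.TStep1 a b) :
    G.TStep1 (shiftMul n a) (shiftMul n b) := by
  obtain ⟨v, i, hv, hne, rfl⟩ := h
  refine ⟨v, i + n, Multiset.mem_map.2 ⟨(v, i), hv, rfl⟩, hne, ?_⟩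
  show Multiset.map _ _ = _
  rw [Multiset.map_add]
  congr 1
  · exact (Multiset.map_erase _ (shift_inj n) (v, i) a)
  · rw [Multiset.map_map]
    congr 1
    funext e
    simp only [Function.comp_apply]
    congr 1
    omega

lemma tcon_shift (n : ℤ) {a b : Multiset (V × ℤ)} (h : G.tcon a b) :
    G.tcon (shiftMul n a) (shiftMul n b) := by
  have hle : addConGen G.TStep1 ≤
      { r := fun a b => G.tcon (shiftMul n a) (shiftMul n b)
        iseqv := ⟨fun _ => G.tcon.refl _, fun h => G.tcon.symm h,
          fun h₁ h₂ => G.tcon.trans h₁ h₂⟩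
        add' := fun h₁ h₂ => by
          simpa only [map_add] using G.tcon.add h₁ h₂ } := by
    refine AddCon.addConGen_le.2 fun x y hxy => ?_
    exact AddConGen.Rel.of _ _ (G.tstep1_shift n hxy)
  exact hle h

/-- The `ℤ`-action on the talented monoid, `ⁿ(v(i)) = v(i+n)`. -/
def tshift (n : ℤ) : G.TM →+ G.TM :=
  G.tcon.lift (G.tcon.mk'.comp (shiftMul n)) (by
    intro a b h
    show G.tcon.mk' (shiftMul n a) = G.tcon.mk' (shiftMul n b)
    exact (AddCon.eq _).2 (G.tcon_shift n h))

/-- Reachability: there is a (possibly trivial) path from `u` to `v`. -/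
def Reaches (u v : V) : Prop :=
  Relation.ReflTransGen (fun a b => ∃ e : Ed, G.s e = a ∧ G.r e = b) u v

/-- A cycle: a nonempty path of edges, closed up, with distinct source vertices. -/
def IsCycle (p : List Ed) : Prop :=
  ∃ h : p ≠ [], List.Chain' (fun e f => G.r e = G.s f) p ∧
    G.r (p.getLast h) = G.s (p.head h) ∧ (p.map G.s).Nodup

/-- The cycle `p` has an exit: some vertex on it emits an edge not on the cycle. -/
def HasExit (p : List Ed) : Prop :=
  ∃ e : Ed, (∃ f ∈ p, G.s e = G.s f) ∧ e ∉ p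

/-- The cycle `p` has no exit: every vertex on it emits exactly its cycle edge. -/
def NoExit (p : List Ed) : Prop :=
  ∀ e ∈ p, G.emit (G.s e) = {e}

/-- `ℤ`-order-ideals of the talented monoid. -/
def IsOrderIdeal (I : Set G.TM) : Prop :=
  (0 : G.TM) ∈ I ∧ (∀ a b : G.TM, a ∈ I → b ∈ I → a + b ∈ I) ∧
    (∀ (n : ℤ) (a : G.TM), a ∈ I → G.tshift n a ∈ I) ∧
    (∀ a b : G.TM, algLE a b → b ∈ I → a ∈ I)

/-- The smallest `ℤ`-order-ideal of `M_E^{gr}` containing `v(0)`. -/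
def genIdeal (v : V) : Set G.TM :=
  ⋂₀ {I : Set G.TM | G.IsOrderIdeal I ∧ G.tgen v 0 ∈ I}

/-- Minimality in the talented monoid: `0 ≠ b ≤ a` implies `a ≤ b`. -/
def TMin (a : G.TM) : Prop := ∀ b : G.TM, b ≠ 0 → algLE b a → algLE a b

/-- The covering graph `\bar E`. -/
def cover : RFGraph (V × ℤ) (Ed × ℤ) where
  s p := (G.s p.1, p.2)
  r p := (G.r p.1, p.2 + 1)
  emit p := (G.emit p.1).map ⟨fun e => (e, p.2), fun a b h => by
    simpa using congrArg Prod.fst h⟩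
  mem_emit := by
    rintro ⟨e, n⟩ ⟨v, m⟩
    simp only [Finset.mem_map, Function.Embedding.coeFn_mk, Prod.mk.injEq, G.mem_emit]
    constructor
    · rintro ⟨a, ha, rfl, rfl⟩; exact ⟨ha, rfl⟩
    · rintro ⟨rfl, rfl⟩; first | exact ⟨e, rfl, rfl, rfl⟩ | exact ⟨e, rfl, rfl⟩ | exact ⟨e, by simp [G.mem_emit]⟩

/-- The set of vertices on a cycle. -/
def cycVerts (p : List Ed) : Set V := {v | ∃ e ∈ p, G.s e = v}

end RFGraph

namespace RFGraph

variable {V Ed : Type} [DecidableEq V] (G : RFGraph V Ed)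

lemma step1_add_cases {b₁ b₂ c : Multiset V} (h : G.Step1 (b₁ + b₂) c) :
    (∃ c₁, G.Step1 b₁ c₁ ∧ c = c₁ + b₂) ∨ (∃ c₂, G.Step1 b₂ c₂ ∧ c = b₁ + c₂) := by
  obtain ⟨v, hv, hne, rfl⟩ := h
  rcases Multiset.mem_add.1 hv with hv | hv
  · refine .inl ⟨_, ⟨v, hv, hne, rfl⟩, ?_⟩
    rw [Multiset.erase_add_left_pos _ hv]
    abel
  · refine .inr ⟨_, ⟨v, hv, hne, rfl⟩, ?_⟩
    rw [Multiset.erase_add_right_pos _ hv]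
    abel

end RFGraph

theorem step_refines_general {V Ed : Type} [DecidableEq V] (G : RFGraph V Ed)
    (a₁ a₂ b : Multiset V)
    (h : G.Step (a₁ + a₂) b) :
    ∃ b₁ b₂ : Multiset V, b = b₁ + b₂ ∧ G.Step a₁ b₁ ∧ G.Step a₂ b₂ := by
  induction h with
  | refl => exact ⟨a₁, a₂, rfl, .refl, .refl⟩
  | tail _ hstep ih =>
    obtain ⟨b₁, b₂, rfl, hb₁, hb₂⟩ := ih
    rcases G.step1_add_cases hstep with ⟨c₁, hc₁, rfl⟩ | ⟨c₂, hc₂, rfl⟩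
    · exact ⟨c₁, b₂, rfl, hb₁.tail hc₁, hb₂⟩
    · exact ⟨b₁, c₂, rfl, hb₁, hb₂.tail hc₂⟩

/-- If `a = a₁ + a₂` with `a₁, a₂ ≠ 0` and `a → b`, then `b = b₁ + b₂` with
`a₁ → b₁` and `a₂ → b₂`. -/
theorem step_refines {V Ed : Type} [DecidableEq V] (G : RFGraph V Ed)
    (a₁ a₂ b : Multiset V) (h₁ : a₁ ≠ 0) (h₂ : a₂ ≠ 0)
    (h : G.Step (a₁ + a₂) b) :
    ∃ b₁ b₂ : Multiset V, b = b₁ + b₂ ∧ G.Step a₁ b₁ ∧ G.Step a₂ b₂ :=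
  step_refines_general G a₁ a₂ b h
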